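/- arXiv:2301.13850 — 2 statements merged into one kernel-verified Lean document; each statement's English description precedes it below -/
import Mathlib

section
/- For any p ∈ [2, ∞], the ellipsoid achieving Γ_p of an ellipsoid is itself: if E = A·B₂^d + u, then Γ_p(E) = sqrt(tr_{p/2}(A Aᵀ)). -/
open scoped ENNReal
open MeasureTheory ProbabilityTheory Matrix Set Bornology

/-- The `ℓ_p` norm of a finite-dimensional real vector, `p ∈ [1,∞]`. -/
noncomputable def pnorm (p : ℝ≥0∞) {ι : Type*} [Fintype ι] (x : ι → ℝ) : ℝ :=
  if p = ∞ then ⨆ i, |x i| else (∑ i, |x i| ^ p.toReal) ^ (1 / p.toReal)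

/-- `tr_p M`: the `ℓ_p` norm of the diagonal of a square matrix. -/
noncomputable def trp (p : ℝ≥0∞) {ι : Type*} [Fintype ι] (M : Matrix ι ι ℝ) : ℝ :=
  pnorm p (fun i => M i i)

/-- The closed Euclidean unit ball. -/
def ball2 (ι : Type*) [Fintype ι] : Set (ι → ℝ) := {x | ∑ i, (x i) ^ 2 ≤ 1}

/-- `Γ_p(K) = inf { sqrt(tr_{p/2}(A Aᵀ)) : ∃ v, K + v ⊆ A · B₂ }`. -/
noncomputable def Gamma (p : ℝ≥0∞) {ι : Type*} [Fintype ι] [DecidableEq ι]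
    (K : Set (ι → ℝ)) : ℝ :=
  sInf {r : ℝ | ∃ A : Matrix ι ι ℝ,
    r = Real.sqrt (trp (p / 2) (A * Aᵀ)) ∧
    ∃ v : ι → ℝ, (fun x => x + v) '' K ⊆ (fun x => A.mulVec x) '' ball2 ι}

/-- The support function `h_K(θ) = sup_{x ∈ K} ⟨x, θ⟩`. -/
noncomputable def suppFn {ι : Type*} [Fintype ι] (K : Set (ι → ℝ)) (θ : ι → ℝ) : ℝ :=
  sSup ((fun x => ∑ i, x i * θ i) '' K)

/-- The width function `w_K(θ) = sup_{x ∈ K} ⟨x, θ⟩ - inf_{x ∈ K} ⟨x, θ⟩`. -/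
noncomputable def widthFn {ι : Type*} [Fintype ι] (K : Set (ι → ℝ)) (θ : ι → ℝ) : ℝ :=
  sSup ((fun x => ∑ i, x i * θ i) '' K) - sInf ((fun x => ∑ i, x i * θ i) '' K)

/-! `√((A Aᵀ)ᵢᵢ)`, the length of the `i`-th row of `A`, is half the width of the ellipsoid `A · B₂`
in the direction `eᵢ`. Widths are translation invariant and monotone under inclusion, so any
ellipsoid `B · B₂` containing a translate of `A · B₂` has `(A Aᵀ)ᵢᵢ ≤ (B Bᵀ)ᵢᵢ` for every `i`;
since `tr_{p/2}` is monotone in the diagonal, `A` itself is optimal. -/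

section Ellipsoid

variable {ι : Type*} [Fintype ι]

lemma pnorm_mono (p : ℝ≥0∞) {x y : ι → ℝ} (h : ∀ i, |x i| ≤ |y i|) : pnorm p x ≤ pnorm p y := by
  unfold pnorm
  split_ifs
  · exact ciSup_mono (Finite.bddAbove_range _) h
  · gcongr (∑ i, ?_ ^ _) ^ _ with i
    exact h i

lemma mul_transpose_self_apply_self (C : Matrix ι ι ℝ) (i : ι) :
    (C * Cᵀ) i i = ∑ j, C i j ^ 2 := by
  simp [Matrix.mul_apply, sq]

lemma mul_transpose_self_apply_self_nonneg (C : Matrix ι ι ℝ) (i : ι) : 0 ≤ (C * Cᵀ) i i := by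
  rw [mul_transpose_self_apply_self]
  positivity

lemma neg_mem_ball2 {x : ι → ℝ} (hx : x ∈ ball2 ι) : -x ∈ ball2 ι := by
  simpa [ball2] using hx

lemma abs_mulVec_apply_le_of_mem_ball2 (B : Matrix ι ι ℝ) {y : ι → ℝ} (hy : y ∈ ball2 ι)
    (i : ι) : |(B *ᵥ y) i| ≤ √((B * Bᵀ) i i) := by
  rw [mul_transpose_self_apply_self]
  apply Real.abs_le_sqrt
  calc (B *ᵥ y) i ^ 2 = (∑ j, B i j * y j) ^ 2 := rfl
    _ ≤ (∑ j, B i j ^ 2) * ∑ j, y j ^ 2 := Finset.sum_mul_sq_le_sq_mul_sq _ _ _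
    _ ≤ ∑ j, B i j ^ 2 := mul_le_of_le_one_right (by positivity) hy

/-- The witness is the `i`-th row of `A` divided by its length; when that row vanishes the
division by zero makes it the zero vector, which still works. -/
lemma exists_mem_ball2_mulVec_apply_eq_sqrt (A : Matrix ι ι ℝ) (i : ι) :
    ∃ x ∈ ball2 ι, (A *ᵥ x) i = √((A * Aᵀ) i i) := by
  set s := √((A * Aᵀ) i i)
  have hs : ∑ j, A i j ^ 2 = s * s := by
    rw [Real.mul_self_sqrt (mul_transpose_self_apply_self_nonneg A i),
      mul_transpose_self_apply_self]
  refine ⟨fun j => A i j / s, ?_, ?_⟩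
  · change ∑ j, (A i j / s) ^ 2 ≤ 1
    simp_rw [div_pow, ← Finset.sum_div, hs, ← sq]
    exact div_self_le_one _
  · change ∑ j, A i j * (A i j / s) = s
    simp_rw [mul_div_assoc', ← sq, ← Finset.sum_div, hs]
    exact mul_self_div_self s

lemma diag_mul_transpose_le_of_image_subset {A B : Matrix ι ι ℝ} {w : ι → ℝ}
    (h : (fun y => A *ᵥ y + w) '' ball2 ι ⊆ (B *ᵥ ·) '' ball2 ι) (i : ι) :
    (A * Aᵀ) i i ≤ (B * Bᵀ) i i := by
  have bound : ∀ z ∈ ball2 ι, |(A *ᵥ z) i + w i| ≤ √((B * Bᵀ) i i) := by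
    intro z hz
    obtain ⟨y, hy, hBy⟩ := h ⟨z, hz, rfl⟩
    replace hBy : B *ᵥ y = A *ᵥ z + w := hBy
    rw [← Pi.add_apply, ← hBy]
    exact abs_mulVec_apply_le_of_mem_ball2 B hy i
  obtain ⟨x, hx, hAx⟩ := exists_mem_ball2_mulVec_apply_eq_sqrt A i
  have upper := (abs_le.1 (bound x hx)).2
  have lower := (abs_le.1 (bound (-x) (neg_mem_ball2 hx))).1
  rw [mulVec_neg, Pi.neg_apply, hAx] at lower
  rw [hAx] at upper
  exact (Real.sqrt_le_sqrt_iff (mul_transpose_self_apply_self_nonneg B i)).1 (by linarith)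

lemma image_add_image_ellipsoid (A : Matrix ι ι ℝ) (u v : ι → ℝ) :
    (· + v) '' ((fun y => A *ᵥ y + u) '' ball2 ι) = (fun y => A *ᵥ y + (u + v)) '' ball2 ι := by
  simp only [image_image, add_assoc]

end Ellipsoid

theorem Gamma_ellipsoid_general {d : ℕ} (p : ℝ≥0∞)
    (A : Matrix (Fin d) (Fin d) ℝ) (u : Fin d → ℝ) :
    Gamma p ((fun y => A.mulVec y + u) '' ball2 (Fin d)) =
      Real.sqrt (trp (p / 2) (A * Aᵀ)) := by
  refine IsLeast.csInf_eq ⟨⟨A, rfl, -u, ?_⟩, ?_⟩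
  · rw [image_add_image_ellipsoid, add_neg_cancel]
    simp
  · rintro r ⟨B, rfl, v, hsub⟩
    rw [image_add_image_ellipsoid] at hsub
    refine Real.sqrt_le_sqrt (pnorm_mono _ fun i => ?_)
    exact abs_le_abs_of_nonneg (mul_transpose_self_apply_self_nonneg A i)
      (diag_mul_transpose_le_of_image_subset hsub i)

/-- For `p ∈ [2,∞]` and an ellipsoid `E = A·B₂^d + u`,
`Γ_p(E) = sqrt(tr_{p/2}(A Aᵀ))`. -/
theorem Gamma_ellipsoid {d : ℕ} (p : ℝ≥0∞) (hp : 2 ≤ p)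
    (A : Matrix (Fin d) (Fin d) ℝ) (u : Fin d → ℝ) :
    Gamma p ((fun y => A.mulVec y + u) '' ball2 (Fin d)) =
      Real.sqrt (trp (p / 2) (A * Aᵀ)) :=
  Gamma_ellipsoid_general p A u
end

section
/- Projection with large minimum width: for any bounded K ⊆ ℝ^d there exists an orthogonal projection P of ℝ^d such that Γ₂(P(K)) ≥ Γ₂(K)/2 and, for every unit vector θ in the image of P, the width w_{P(K)}(θ) ≥ Γ₂(K)/(2d). -/
open scoped ENNReal
open MeasureTheory ProbabilityTheory Matrix Set Bornology

/-!
`Γ₂` is monotone and subadditive under Minkowski sums, and a segment `[m, M] • θ` in a unit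
direction has `Γ₂ ≤ (M - m) / 2`. As `K ⊆ (I - θθᵀ) K + [m, M] • θ`, where `[m, M]` is the range of
`⟪·, θ⟫` on `K`, projecting out a unit direction in which `K` has width less than `w` lowers `Γ₂` by
less than `w` and the trace of the projection by one. Starting from `P = I` we project out such
directions until there are none left; this takes at most `d` steps, so with `w = Γ₂(K) / (2d)` the
total loss is at most `d w = Γ₂(K) / 2`.
-/

open scoped Pointwise

section Ellipsoid

variable {ι : Type*} [Fintype ι]

lemma dotProduct_self_nonneg (x : ι → ℝ) : 0 ≤ x ⬝ᵥ x := by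
  simpa using dotProduct_self_star_nonneg x

lemma mem_ball2_iff {x : ι → ℝ} : x ∈ ball2 ι ↔ x ⬝ᵥ x ≤ 1 := by
  simp [ball2, dotProduct, sq]

lemma posSemidef_mul_transpose (A : Matrix ι ι ℝ) : (A * Aᵀ).PosSemidef := by
  simpa using posSemidef_self_mul_conjTranspose A

lemma trace_mul_transpose_nonneg (A : Matrix ι ι ℝ) : 0 ≤ (A * Aᵀ).trace :=
  (posSemidef_mul_transpose A).trace_nonneg

lemma dotProduct_mul_transpose_mulVec (A : Matrix ι ι ℝ) (x : ι → ℝ) :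
    x ⬝ᵥ (A * Aᵀ) *ᵥ x = (Aᵀ *ᵥ x) ⬝ᵥ (Aᵀ *ᵥ x) := by
  rw [← mulVec_mulVec, dotProduct_mulVec, ← mulVec_transpose]

lemma dotProduct_le_sqrt_of_mem_ball2 {u : ι → ℝ} (hu : u ∈ ball2 ι) (v : ι → ℝ) :
    u ⬝ᵥ v ≤ √(v ⬝ᵥ v) := by
  have hv : √(∑ i, v i ^ 2) = √(v ⬝ᵥ v) := by simp [dotProduct, sq]
  calc u ⬝ᵥ v ≤ √(∑ i, u i ^ 2) * √(∑ i, v i ^ 2) := Real.sum_mul_le_sqrt_mul_sqrt _ u v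
    _ ≤ √(v ⬝ᵥ v) := by
        rw [hv]; exact mul_le_of_le_one_left (Real.sqrt_nonneg _) (Real.sqrt_le_one.2 hu)

lemma dotProduct_le_of_mem_image_ball2 {A : Matrix ι ι ℝ} {y : ι → ℝ}
    (hy : y ∈ (A *ᵥ ·) '' ball2 ι) (x : ι → ℝ) :
    y ⬝ᵥ x ≤ √((Aᵀ *ᵥ x) ⬝ᵥ (Aᵀ *ᵥ x)) := by
  obtain ⟨u, hu, rfl⟩ := hy
  rw [dotProduct_comm, dotProduct_mulVec, ← mulVec_transpose, dotProduct_comm]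
  exact dotProduct_le_sqrt_of_mem_ball2 hu _

lemma mem_image_ball2_of_forall_dotProduct_le [DecidableEq ι] {S : Matrix ι ι ℝ} (hS : IsUnit S)
    {y : ι → ℝ} (hy : ∀ x, y ⬝ᵥ x ≤ √((Sᵀ *ᵥ x) ⬝ᵥ (Sᵀ *ᵥ x))) : y ∈ (S *ᵥ ·) '' ball2 ι := by
  obtain ⟨z, rfl⟩ := mulVec_surjective_iff_isUnit.2 hS y
  obtain ⟨x, hx : x ᵥ* S = z⟩ := vecMul_surjective_iff_isUnit.2 hS z
  refine ⟨z, ?_, rfl⟩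
  have hzz := hy x
  rw [mulVec_transpose, hx, dotProduct_comm, dotProduct_mulVec, hx] at hzz
  rw [mem_ball2_iff]
  nlinarith [Real.sq_sqrt (dotProduct_self_nonneg z), Real.sqrt_nonneg (z ⬝ᵥ z)]

open scoped MatrixOrder in
lemma exists_isUnit_mul_transpose_eq [DecidableEq ι] {M : Matrix ι ι ℝ} (hM : M.PosDef) :
    ∃ S : Matrix ι ι ℝ, IsUnit S ∧ S * Sᵀ = M := by
  have hsq : CFC.sqrt M * CFC.sqrt M = M := CFC.sqrt_mul_sqrt_self M hM.posSemidef.nonneg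
  have hsym : (CFC.sqrt M)ᵀ = CFC.sqrt M := by
    rw [← conjTranspose_eq_transpose_of_trivial]
    exact (CFC.sqrt_nonneg M).posSemidef.1
  exact ⟨CFC.sqrt M, isUnit_of_mul_isUnit_left (hsq ▸ hM.isUnit), by rw [hsym, hsq]⟩

lemma add_le_sqrt_mul_div_add_div {p q : ℝ} (hp : 0 < p) (hq : 0 < q) (a b : ℝ) :
    a + b ≤ √((p + q) * (a ^ 2 / p + b ^ 2 / q)) := by
  refine (le_abs_self _).trans (Real.abs_le_sqrt ?_)
  rw [div_add_div _ _ hp.ne' hq.ne', mul_div_assoc', le_div_iff₀ (by positivity)]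
  nlinarith [sq_nonneg (a * q - b * p)]

lemma add_mul_sq_div_add_sq_div_le {a b δ ε n : ℝ} (ha : 0 ≤ a) (hb : 0 ≤ b) (hδ : 0 < δ)
    (hn : 0 ≤ n) (hδε : δ * (n + 1) = ε) :
    (a + δ + (b + δ)) * (a ^ 2 / (a + δ) + b ^ 2 / (b + δ)) + δ ^ 2 * n ≤ (a + b + ε) ^ 2 := by
  have h₁ : a ^ 2 / (a + δ) ≤ a := by rw [div_le_iff₀ (by positivity)]; nlinarith
  have h₂ : b ^ 2 / (b + δ) ≤ b := by rw [div_le_iff₀ (by positivity)]; nlinarith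
  have hδn : δ ^ 2 * n ≤ ε ^ 2 := by rw [← hδε]; nlinarith [sq_nonneg δ]
  have hδε' : δ ≤ ε := by rw [← hδε]; nlinarith
  nlinarith [mul_le_mul_of_nonneg_left (add_le_add h₁ h₂) (by positivity : 0 ≤ a + δ + (b + δ)),
    mul_le_mul_of_nonneg_right hδε' (add_nonneg ha hb)]

/-- The ellipsoid is `S B` with `S Sᵀ = M = (p + q) (A₁A₁ᵀ / p + A₂A₂ᵀ / q) + δ² I`, where
`p = ‖A₁‖_F + δ` and `q = ‖A₂‖_F + δ`: its support function `√⟪x, M x⟫` dominates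
`‖A₁ᵀx‖ + ‖A₂ᵀx‖` by Cauchy–Schwarz, and `δ² I` makes `S` invertible. -/
lemma exists_image_ball2_add_subset [DecidableEq ι] (A₁ A₂ : Matrix ι ι ℝ) {ε : ℝ} (hε : 0 < ε) :
    ∃ A : Matrix ι ι ℝ,
      √(A * Aᵀ).trace ≤ √(A₁ * A₁ᵀ).trace + √(A₂ * A₂ᵀ).trace + ε ∧
      (A₁ *ᵥ ·) '' ball2 ι + (A₂ *ᵥ ·) '' ball2 ι ⊆ (A *ᵥ ·) '' ball2 ι := by
  set a₁ := √(A₁ * A₁ᵀ).trace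
  set a₂ := √(A₂ * A₂ᵀ).trace
  set δ := ε / (Fintype.card ι + 1)
  have hδ : 0 < δ := by positivity
  set p := a₁ + δ
  set q := a₂ + δ
  have hp : 0 < p := by positivity
  have hq : 0 < q := by positivity
  set M : Matrix ι ι ℝ := (p + q) • (p⁻¹ • (A₁ * A₁ᵀ) + q⁻¹ • (A₂ * A₂ᵀ)) + δ ^ 2 • 1
  have hM : M.PosDef :=
    PosDef.posSemidef_add
      ((((posSemidef_mul_transpose A₁).smul (inv_pos.2 hp).le).add
        ((posSemidef_mul_transpose A₂).smul (inv_pos.2 hq).le)).smul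
        (show (0 : ℝ) ≤ p + q by positivity))
      (PosDef.one.smul (show (0 : ℝ) < δ ^ 2 by positivity))
  obtain ⟨S, hS, hSM⟩ := exists_isUnit_mul_transpose_eq hM
  refine ⟨S, ?_, ?_⟩
  · have htr : (S * Sᵀ).trace = (p + q) * (a₁ ^ 2 / p + a₂ ^ 2 / q) + δ ^ 2 * Fintype.card ι := by
      simp only [hSM, M, trace_add, trace_smul, trace_one, smul_eq_mul, a₁, a₂,
        Real.sq_sqrt (trace_mul_transpose_nonneg _)]
      ring
    rw [Real.sqrt_le_left (by positivity), htr]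
    exact add_mul_sq_div_add_sq_div_le (Real.sqrt_nonneg _) (Real.sqrt_nonneg _) hδ
      (Nat.cast_nonneg _) (div_mul_cancel₀ ε (by positivity))
  · rintro _ ⟨_, ⟨u, hu, rfl⟩, _, ⟨w, hw, rfl⟩, rfl⟩
    refine mem_image_ball2_of_forall_dotProduct_le hS fun x => ?_
    set b₁ := (A₁ᵀ *ᵥ x) ⬝ᵥ (A₁ᵀ *ᵥ x)
    set b₂ := (A₂ᵀ *ᵥ x) ⬝ᵥ (A₂ᵀ *ᵥ x)
    have hquad : x ⬝ᵥ M *ᵥ x = (p + q) * (b₁ / p + b₂ / q) + δ ^ 2 * (x ⬝ᵥ x) := by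
      simp only [M, add_mulVec, smul_mulVec, one_mulVec, dotProduct_add, dotProduct_smul,
        dotProduct_mul_transpose_mulVec, smul_eq_mul, b₁, b₂]
      ring
    calc (A₁ *ᵥ u + A₂ *ᵥ w) ⬝ᵥ x = (A₁ *ᵥ u) ⬝ᵥ x + (A₂ *ᵥ w) ⬝ᵥ x := add_dotProduct _ _ _
      _ ≤ √b₁ + √b₂ := add_le_add (dotProduct_le_of_mem_image_ball2 ⟨u, hu, rfl⟩ x)
          (dotProduct_le_of_mem_image_ball2 ⟨w, hw, rfl⟩ x)
      _ ≤ √((p + q) * (√b₁ ^ 2 / p + √b₂ ^ 2 / q)) := add_le_sqrt_mul_div_add_div hp hq _ _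
      _ ≤ √(x ⬝ᵥ M *ᵥ x) := by
          rw [Real.sq_sqrt (dotProduct_self_nonneg _), Real.sq_sqrt (dotProduct_self_nonneg _),
            hquad]
          exact Real.sqrt_le_sqrt (by nlinarith [dotProduct_self_nonneg x])
      _ = √((Sᵀ *ᵥ x) ⬝ᵥ (Sᵀ *ᵥ x)) := by rw [← hSM, dotProduct_mul_transpose_mulVec]

end Ellipsoid

lemma Bornology.IsBounded.image_of_continuous {α β : Type*} [PseudoMetricSpace α] [ProperSpace α]
    [PseudoMetricSpace β] {f : α → β} (hf : Continuous f) {s : Set α} (hs : IsBounded s) :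
    IsBounded (f '' s) :=
  (hs.isCompact_closure.image hf).isBounded.subset (image_mono subset_closure)

section Projection

variable {ι : Type*} [Fintype ι] {P : Matrix ι ι ℝ} {θ : ι → ℝ}

omit [Fintype ι] in
lemma transpose_sub_vecMulVec (hPt : Pᵀ = P) : (P - vecMulVec θ θ)ᵀ = P - vecMulVec θ θ := by
  rw [transpose_sub, hPt, transpose_vecMulVec]

lemma sub_vecMulVec_mul_self (hPt : Pᵀ = P) (hPP : P * P = P) (hPθ : P *ᵥ θ = θ)
    (hθ : θ ⬝ᵥ θ = 1) : (P - vecMulVec θ θ) * (P - vecMulVec θ θ) = P - vecMulVec θ θ := by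
  rw [mul_sub, sub_mul, sub_mul, hPP, mul_vecMulVec, hPθ, vecMulVec_mul, ← mulVec_transpose, hPt,
    hPθ, vecMulVec_mul_vecMulVec, hθ, one_smul]
  abel

lemma one_sub_vecMulVec_mul [DecidableEq ι] (hPt : Pᵀ = P) (hPθ : P *ᵥ θ = θ) :
    (1 - vecMulVec θ θ) * P = P - vecMulVec θ θ := by
  rw [sub_mul, one_mul, vecMulVec_mul, ← mulVec_transpose, hPt, hPθ]

lemma trace_sub_vecMulVec (hθ : θ ⬝ᵥ θ = 1) : (P - vecMulVec θ θ).trace = P.trace - 1 := by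
  rw [trace_sub, trace_vecMulVec, hθ]

lemma trace_nonneg_of_transpose_eq_of_mul_self_eq (hPt : Pᵀ = P) (hPP : P * P = P) :
    0 ≤ P.trace := by
  simpa [hPt, hPP] using trace_mul_transpose_nonneg P

lemma one_le_trace_of_mulVec_eq (hPt : Pᵀ = P) (hPP : P * P = P) (hPθ : P *ᵥ θ = θ)
    (hθ : θ ⬝ᵥ θ = 1) : 1 ≤ P.trace := by
  have := trace_nonneg_of_transpose_eq_of_mul_self_eq (transpose_sub_vecMulVec hPt)
    (sub_vecMulVec_mul_self hPt hPP hPθ hθ)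
  rw [trace_sub_vecMulVec hθ] at this
  linarith

end Projection

section Gamma

variable {ι : Type*} [Fintype ι]

lemma trp_one_mul_transpose (A : Matrix ι ι ℝ) : trp 1 (A * Aᵀ) = (A * Aᵀ).trace := by
  simp only [trp, pnorm, if_neg ENNReal.one_ne_top, ENNReal.toReal_one, Real.rpow_one,
    div_one, trace, diag]
  exact Finset.sum_congr rfl fun i _ => abs_of_nonneg (posSemidef_mul_transpose A).diag_nonneg

lemma widthFn_nonneg {K : Set (ι → ℝ)} (hK : IsBounded K) (θ : ι → ℝ) : 0 ≤ widthFn K θ :=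
  have hKθ := hK.image_of_continuous (f := fun x => ∑ i, x i * θ i) (by fun_prop)
  sub_nonneg.2 (Real.sInf_le_sSup _ hKθ.bddBelow hKθ.bddAbove)

variable [DecidableEq ι]

lemma Gamma_two_eq (K : Set (ι → ℝ)) :
    Gamma 2 K = sInf {r | ∃ A : Matrix ι ι ℝ, r = √(A * Aᵀ).trace ∧
      ∃ v, (· + v) '' K ⊆ (A *ᵥ ·) '' ball2 ι} := by
  simp only [Gamma, ENNReal.div_self two_ne_zero ENNReal.ofNat_ne_top, trp_one_mul_transpose]

lemma Gamma_two_nonneg (K : Set (ι → ℝ)) : 0 ≤ Gamma 2 K := by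
  rw [Gamma_two_eq]
  exact Real.sInf_nonneg (by rintro _ ⟨A, rfl, -⟩; positivity)

lemma Gamma_two_le {K : Set (ι → ℝ)} {A : Matrix ι ι ℝ} {v : ι → ℝ}
    (h : (· + v) '' K ⊆ (A *ᵥ ·) '' ball2 ι) : Gamma 2 K ≤ √(A * Aᵀ).trace := by
  rw [Gamma_two_eq]
  exact csInf_le ⟨0, by rintro _ ⟨B, rfl, -⟩; positivity⟩ ⟨A, rfl, v, h⟩

lemma exists_subset_image_ball2 {K : Set (ι → ℝ)} (hK : IsBounded K) :
    ∃ A : Matrix ι ι ℝ, K ⊆ (A *ᵥ ·) '' ball2 ι := by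
  obtain ⟨R, hR⟩ := (hK.image_of_continuous (f := fun x => x ⬝ᵥ x) (by fun_prop)).bddAbove
  set c := |R| + 1
  have hc : 0 < c := by positivity
  refine ⟨c • 1, fun x hx => ⟨c⁻¹ • x, ?_, by simp [smul_mulVec, smul_smul, hc.ne']⟩⟩
  have hxR : x ⬝ᵥ x ≤ c ^ 2 :=
    (hR ⟨x, hx, rfl⟩).trans (by nlinarith [le_abs_self R, abs_nonneg R])
  rw [mem_ball2_iff, smul_dotProduct, dotProduct_smul, smul_eq_mul, smul_eq_mul, ← mul_assoc,
    ← sq, inv_pow, inv_mul_le_one₀ (by positivity)]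
  exact hxR

lemma exists_lt_Gamma_two_add {K : Set (ι → ℝ)} (hK : IsBounded K) {ε : ℝ} (hε : 0 < ε) :
    ∃ (A : Matrix ι ι ℝ) (v : ι → ℝ),
      (· + v) '' K ⊆ (A *ᵥ ·) '' ball2 ι ∧ √(A * Aᵀ).trace < Gamma 2 K + ε := by
  obtain ⟨A, hA⟩ := exists_subset_image_ball2 hK
  rw [Gamma_two_eq]
  obtain ⟨_, ⟨B, rfl, v, hv⟩, hB⟩ := Real.lt_sInf_add_pos
    (s := {r | ∃ A : Matrix ι ι ℝ, r = √(A * Aᵀ).trace ∧ ∃ v, (· + v) '' K ⊆ (A *ᵥ ·) '' ball2 ι})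
    ⟨_, A, rfl, 0, by simpa using hA⟩ hε
  exact ⟨B, v, hv, hB⟩

lemma Gamma_two_mono {K L : Set (ι → ℝ)} (hL : IsBounded L) (h : K ⊆ L) :
    Gamma 2 K ≤ Gamma 2 L := by
  refine le_of_forall_pos_lt_add fun ε hε => ?_
  obtain ⟨A, v, hv, hA⟩ := exists_lt_Gamma_two_add hL hε
  exact (Gamma_two_le ((image_mono h).trans hv)).trans_lt hA

lemma Gamma_two_add_le {K₁ K₂ : Set (ι → ℝ)} (hK₁ : IsBounded K₁) (hK₂ : IsBounded K₂) :
    Gamma 2 (K₁ + K₂) ≤ Gamma 2 K₁ + Gamma 2 K₂ := by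
  refine le_of_forall_pos_lt_add fun ε hε => ?_
  obtain ⟨A₁, v₁, h₁, hA₁⟩ := exists_lt_Gamma_two_add hK₁ (by positivity : 0 < ε / 3)
  obtain ⟨A₂, v₂, h₂, hA₂⟩ := exists_lt_Gamma_two_add hK₂ (by positivity : 0 < ε / 3)
  obtain ⟨A, hA, hsub⟩ := exists_image_ball2_add_subset A₁ A₂ (by positivity : 0 < ε / 3)
  have hK : (· + (v₁ + v₂)) '' (K₁ + K₂) ⊆ (A *ᵥ ·) '' ball2 ι := by
    rintro _ ⟨_, ⟨x₁, hx₁, x₂, hx₂, rfl⟩, rfl⟩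
    exact hsub ⟨x₁ + v₁, h₁ ⟨x₁, hx₁, rfl⟩, x₂ + v₂, h₂ ⟨x₂, hx₂, rfl⟩,
      add_add_add_comm _ _ _ _⟩
  linarith [Gamma_two_le hK]

lemma Gamma_two_image_smul_Icc_le {θ : ι → ℝ} (hθ : θ ⬝ᵥ θ = 1) {m M : ℝ} (hmM : m ≤ M) :
    Gamma 2 ((· • θ) '' Icc m M) ≤ (M - m) / 2 := by
  set s := (M - m) / 2
  set c := (m + M) / 2
  have hs : 0 ≤ s := by simp only [s]; linarith
  have htr : √((s • vecMulVec θ θ) * (s • vecMulVec θ θ)ᵀ).trace = s := by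
    rw [transpose_smul, transpose_vecMulVec, smul_mul_smul_comm, vecMulVec_mul_vecMulVec, hθ,
      one_smul, trace_smul, trace_vecMulVec, hθ, smul_eq_mul, mul_one, Real.sqrt_mul_self hs]
  refine htr ▸ Gamma_two_le (v := -c • θ) ?_
  rintro _ ⟨_, ⟨t, ⟨htm, htM⟩, rfl⟩, rfl⟩
  have hts : |t - c| ≤ s := abs_le.2 ⟨by simp only [s, c]; linarith, by simp only [s, c]; linarith⟩
  have hst : s * ((t - c) / s) = t - c := by
    rcases hs.eq_or_lt with hs0 | hs0
    · rw [← hs0] at hts ⊢; simp [abs_nonpos_iff.1 hts]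
    · field_simp
  refine ⟨((t - c) / s) • θ, ?_, ?_⟩
  · rw [mem_ball2_iff, smul_dotProduct, dotProduct_smul, hθ, smul_eq_mul, smul_eq_mul, mul_one,
      ← sq, div_pow]
    exact div_le_one_of_le₀ (sq_le_sq.2 (by rwa [abs_of_nonneg hs])) (sq_nonneg s)
  · dsimp only
    rw [smul_mulVec, vecMulVec_mulVec, dotProduct_smul, hθ, op_smul_eq_smul, smul_eq_mul, mul_one,
      smul_smul, hst, neg_smul, ← sub_eq_add_neg, ← sub_smul]

lemma Gamma_two_le_Gamma_two_image_add_half_widthFn {K : Set (ι → ℝ)} (hK : IsBounded K)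
    {θ : ι → ℝ} (hθ : θ ⬝ᵥ θ = 1) :
    Gamma 2 K ≤ Gamma 2 (((1 - vecMulVec θ θ) *ᵥ ·) '' K) + widthFn K θ / 2 := by
  have hKθ := hK.image_of_continuous (f := (· ⬝ᵥ θ)) (by fun_prop)
  set m := sInf ((· ⬝ᵥ θ) '' K)
  set M := sSup ((· ⬝ᵥ θ) '' K)
  set K' := ((1 - vecMulVec θ θ) *ᵥ ·) '' K
  have hK' : IsBounded K' := hK.image_of_continuous (by fun_prop)
  have hseg : IsBounded ((· • θ) '' Icc m M) := (isCompact_Icc.image (by fun_prop)).isBounded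
  have hsub : K ⊆ K' + (· • θ) '' Icc m M := fun x hx =>
    ⟨_, ⟨x, hx, rfl⟩, _,
      ⟨x ⬝ᵥ θ, ⟨csInf_le hKθ.bddBelow ⟨x, hx, rfl⟩, le_csSup hKθ.bddAbove ⟨x, hx, rfl⟩⟩, rfl⟩,
      by simp [sub_mulVec, vecMulVec_mulVec, dotProduct_comm θ]⟩
  calc Gamma 2 K ≤ Gamma 2 (K' + (· • θ) '' Icc m M) := Gamma_two_mono (hK'.add hseg) hsub
    _ ≤ Gamma 2 K' + Gamma 2 ((· • θ) '' Icc m M) := Gamma_two_add_le hK' hseg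
    _ ≤ Gamma 2 K' + widthFn K θ / 2 := add_le_add_right (Gamma_two_image_smul_Icc_le hθ
          (Real.sInf_le_sSup _ hKθ.bddBelow hKθ.bddAbove)) _

lemma exists_proj_forall_le_widthFn {K : Set (ι → ℝ)} (hK : IsBounded K) (w : ℝ) (n : ℕ) :
    ∀ P : Matrix ι ι ℝ, Pᵀ = P → P * P = P → P.trace ≤ n →
      ∃ Q : Matrix ι ι ℝ, Qᵀ = Q ∧ Q * Q = Q ∧
        Gamma 2 ((P *ᵥ ·) '' K) ≤ Gamma 2 ((Q *ᵥ ·) '' K) + (P.trace - Q.trace) * w ∧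
        ∀ θ, Q *ᵥ θ = θ → θ ⬝ᵥ θ = 1 → w ≤ widthFn ((Q *ᵥ ·) '' K) θ := by
  induction n with
  | zero =>
    intro P hPt hPP htr
    refine ⟨P, hPt, hPP, by simp, fun θ hPθ hθ => ?_⟩
    linarith [one_le_trace_of_mulVec_eq hPt hPP hPθ hθ, show P.trace ≤ 0 by exact_mod_cast htr]
  | succ n ih =>
    intro P hPt hPP htr
    by_cases hgood : ∀ θ, P *ᵥ θ = θ → θ ⬝ᵥ θ = 1 → w ≤ widthFn ((P *ᵥ ·) '' K) θ
    · exact ⟨P, hPt, hPP, by simp, hgood⟩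
    push Not at hgood
    obtain ⟨θ, hPθ, hθ, hθw⟩ := hgood
    obtain ⟨Q, hQt, hQQ, hQ, hQw⟩ := ih (P - vecMulVec θ θ) (transpose_sub_vecMulVec hPt)
      (sub_vecMulVec_mul_self hPt hPP hPθ hθ)
      (by rw [trace_sub_vecMulVec hθ]; push_cast at htr; linarith)
    refine ⟨Q, hQt, hQQ, ?_, hQw⟩
    have hPK : IsBounded ((P *ᵥ ·) '' K) := hK.image_of_continuous (by fun_prop)
    have hstep := Gamma_two_le_Gamma_two_image_add_half_widthFn hPK hθ
    simp only [image_image, mulVec_mulVec, one_sub_vecMulVec_mul hPt hPθ] at hstep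
    rw [trace_sub_vecMulVec hθ] at hQ
    linarith [widthFn_nonneg hPK θ]

end Gamma

/-- for any bounded `K ⊆ ℝ^d` there is an orthogonal projection
`P` with `Γ₂(P K) ≥ Γ₂(K)/2` and width at least `Γ₂(K)/(2d)` in every unit
direction of the image of `P`. -/
theorem exists_proj_large_width {d : ℕ} (K : Set (Fin d → ℝ))
    (hK : IsBounded K) :
    ∃ P : Matrix (Fin d) (Fin d) ℝ, Pᵀ = P ∧ P * P = P ∧
      Gamma 2 K / 2 ≤ Gamma 2 ((fun x => P.mulVec x) '' K) ∧
      ∀ θ : Fin d → ℝ, P.mulVec θ = θ → (∑ i, (θ i) ^ 2) = 1 →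
        Gamma 2 K / (2 * d) ≤ widthFn ((fun x => P.mulVec x) '' K) θ := by
  obtain ⟨P, hPt, hPP, hΓ, hw⟩ :=
    exists_proj_forall_le_widthFn hK (Gamma 2 K / (2 * d)) d 1 transpose_one (mul_one 1)
      (by simp)
  refine ⟨P, hPt, hPP, ?_, fun θ hPθ hθ => hw θ hPθ (by simpa [dotProduct, sq] using hθ)⟩
  simp only [one_mulVec, image_id', trace_one, Fintype.card_fin] at hΓ
  have hloss : ((d : ℝ) - P.trace) * (Gamma 2 K / (2 * d)) ≤ Gamma 2 K / 2 :=
    calc ((d : ℝ) - P.trace) * (Gamma 2 K / (2 * d)) ≤ d * (Gamma 2 K / (2 * d)) := by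
          have := Gamma_two_nonneg K
          gcongr
          linarith [trace_nonneg_of_transpose_eq_of_mul_self_eq hPt hPP]
      _ = Gamma 2 K / 2 * (d / d) := by ring
      _ ≤ Gamma 2 K / 2 :=
          mul_le_of_le_one_right (by linarith [Gamma_two_nonneg K]) (div_self_le_one _)
  linarith
end
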